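/- arXiv:2003.00283 — 2 statements merged into one kernel-verified Lean document; each statement's English description precedes it below -/
import Mathlib

section
/- Stabilization of the normalized quantum 6j-symbol: fix natural numbers s₁, s₂, s₃, a natural number S, and natural numbers t₁, t₂, t₃, t₄. For each N ∈ ℕ define F_N = (1−q)^{−1} · Σ_{ℓ=0}^{N + min(t₁,t₂,t₃,t₄)} (−1)^ℓ (1 − q^{4N+S−ℓ}) q^{ℓ(3ℓ+1)/2 + ℓ(s₁+s₂+s₃)} · (q;q)_{4N+S−ℓ} / ((q;q)_{s₁+ℓ} (q;q)_{s₂+ℓ} (q;q)_{s₃+ℓ} (q;q)_{N+t₁−ℓ} (q;q)_{N+t₂−ℓ} (q;q)_{N+t₃−ℓ} (q;q)_{N+t₄−ℓ}) ∈ ℤ[[q]]. Then F_N converges coefficientwise to (1/((1−q) · (q;q)_∞³)) · Σ_{ℓ=0}^{∞} (−1)^ℓ q^{ℓ(3ℓ+1)/2 + ℓ(s₁+s₂+s₃)} / ((q;q)_{s₁+ℓ} (q;q)_{s₂+ℓ} (q;q)_{s₃+ℓ}), i.e., for every d ∈ ℕ there exists N₀ such that for all N ≥ N₀ the coefficients of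 q^d on the two sides agree. -/
/-!
STATEMENT 5 (Stabilization of the normalized quantum 6j-symbol).  Work in
ℤ[[q]] (`PowerSeries ℤ`, with `q := PowerSeries.X`).  `(q;q)_n` is a unit of
ℤ[[q]], as are `1 - q` and `(q;q)_∞`; `Ring.inverse` yields the inverse.
`(q;q)_∞` is the q-adic limit of `(q;q)_n`: its `d`-th coefficient is the
stable value `coeff d ((q;q)_d)`.  The infinite q-adic sum on the right-hand
side is encoded coefficientwise: its `ℓ`-th term has q-order `≥ ℓ(3ℓ+1)/2 ≥ ℓ`,
so the q-adic sum is the power series whose `d`-th coefficient is the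
(stabilized) finite sum `∑_{ℓ ≤ d}` of the `d`-th coefficients; this is
`SeriesSum`.

The statement: fix naturals `s₁ s₂ s₃ S t₁ t₂ t₃ t₄` and for `N : ℕ` put
`F_N = (1−q)^{−1} · Σ_{ℓ=0}^{N + min(t₁,t₂,t₃,t₄)} (−1)^ℓ (1 − q^{4N+S−ℓ})
        q^{ℓ(3ℓ+1)/2 + ℓ(s₁+s₂+s₃)} (q;q)_{4N+S−ℓ}
        / ((q;q)_{s₁+ℓ}(q;q)_{s₂+ℓ}(q;q)_{s₃+ℓ}
           (q;q)_{N+t₁−ℓ}(q;q)_{N+t₂−ℓ}(q;q)_{N+t₃−ℓ}(q;q)_{N+t₄−ℓ})`.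
Then `F_N` converges coefficientwise to
`(1/((1−q)(q;q)_∞³)) · Σ_{ℓ≥0} (−1)^ℓ q^{ℓ(3ℓ+1)/2 + ℓ(s₁+s₂+s₃)}
        / ((q;q)_{s₁+ℓ}(q;q)_{s₂+ℓ}(q;q)_{s₃+ℓ})`.
-/

noncomputable section
open PowerSeries

/-- `(q;q)_n = ∏_{j=1}^n (1 - q^j)`. -/
def qPoch (n : ℕ) : PowerSeries ℤ :=
  ∏ j ∈ Finset.range n, (1 - (X : PowerSeries ℤ) ^ (j + 1))

/-- `(q;q)_∞`, the q-adic limit of `(q;q)_n`. -/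
def qPochInf : PowerSeries ℤ := PowerSeries.mk fun d => coeff d (qPoch d)

/-- The q-adic sum of a family of power series whose `n`-th member has q-order `≥ n`. -/
def SeriesSum (f : ℕ → PowerSeries ℤ) : PowerSeries ℤ :=
  PowerSeries.mk fun d => ∑ k ∈ Finset.range (d + 1), coeff d (f k)

/-!
Compare both sides modulo `q ^ (d + 1)`, i.e. in `ℤ[[q]] ⧸ (q ^ (d + 1))`. The `ℓ`-th summand on
either side has `q`-order at least `ℓ(3ℓ+1)/2 ≥ ℓ`, so only `ℓ ≤ d` contributes. For such `ℓ` and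
`N ≥ 2d + 1`, each of `(q;q)_{4N+S-ℓ}` and `(q;q)_{N+tᵢ-ℓ}` is congruent to `(q;q)_∞`, and
`1 - q^{4N+S-ℓ}` to `1`; the numerator `(q;q)_∞` then cancels one of the four denominator factors
`(q;q)_∞`, leaving `(q;q)_∞³`.
-/

namespace PowerSeries

section ModXPow

variable {R : Type*} [CommRing R] {n : ℕ}

theorem mk_span_X_pow_eq_iff {f g : R⟦X⟧} :
    Ideal.Quotient.mk (Ideal.span {X ^ n}) f = Ideal.Quotient.mk (Ideal.span {X ^ n}) g ↔
      ∀ e < n, coeff e f = coeff e g := by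
  simp only [Ideal.Quotient.eq, Ideal.mem_span_singleton, X_pow_dvd_iff, map_sub, sub_eq_zero]

theorem mk_span_X_pow_eq_zero {f : R⟦X⟧} {k : ℕ} (hf : X ^ k ∣ f) (hk : n ≤ k) :
    Ideal.Quotient.mk (Ideal.span {X ^ n}) f = 0 :=
  Ideal.Quotient.eq_zero_iff_mem.mpr <|
    Ideal.mem_span_singleton.mpr <| (pow_dvd_pow X hk).trans hf

theorem mk_sum_range_of_X_pow_dvd {f : ℕ → R⟦X⟧} (hf : ∀ k, X ^ k ∣ f k) {m : ℕ}
    (hm : n ≤ m) :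
    Ideal.Quotient.mk (Ideal.span {X ^ n}) (∑ k ∈ Finset.range m, f k) =
      Ideal.Quotient.mk (Ideal.span {X ^ n}) (∑ k ∈ Finset.range n, f k) := by
  rw [← Finset.sum_range_add_sum_Ico f hm, map_add, add_eq_left, map_sum]
  exact Finset.sum_eq_zero fun k hk ↦ mk_span_X_pow_eq_zero (hf k) (Finset.mem_Ico.mp hk).1

end ModXPow

end PowerSeries

theorem Ring.map_inverse {M N F : Type*} [MonoidWithZero M] [MonoidWithZero N] [FunLike F M N]
    [MonoidHomClass F M N] (f : F) {u : M} (hu : IsUnit u) :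
    f (Ring.inverse u) = Ring.inverse (f u) := by
  rw [← Ring.inverse_mul_cancel_left (f u) (f (Ring.inverse u)) (hu.map f), ← map_mul,
    Ring.mul_inverse_cancel u hu, map_one, mul_one]

theorem Ring.mul_inverse_mul_pow_succ {M : Type*} [CommMonoidWithZero M] {u : M}
    (hu : IsUnit u) (a : M) (k : ℕ) :
    u * Ring.inverse (a * u ^ (k + 1)) = Ring.inverse a * Ring.inverse (u ^ k) := by
  rw [Ring.mul_inverse_rev, ← Ring.inverse_pow, pow_succ', mul_assoc,
    Ring.mul_inverse_cancel_left u _ hu, mul_comm, Ring.inverse_pow]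

theorem Nat.le_pentagonal_add_mul (l s : ℕ) : l ≤ l * (3 * l + 1) / 2 + l * s := by
  have h : l * 2 ≤ l * (3 * l + 1) := by nlinarith [Nat.le_mul_self l]
  exact ((Nat.le_div_iff_mul_le two_pos).mpr h).trans (Nat.le_add_right _ _)

local notation "π[" n "]" => Ideal.Quotient.mk (Ideal.span {(X : ℤ⟦X⟧) ^ n})

theorem constantCoeff_qPoch (m : ℕ) : constantCoeff (qPoch m) = 1 := by
  simp [qPoch, map_prod]

theorem isUnit_qPoch (m : ℕ) : IsUnit (qPoch m) :=
  isUnit_iff_constantCoeff.mpr (by rw [constantCoeff_qPoch]; exact isUnit_one)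

theorem coeff_qPoch_of_le {e m : ℕ} (h : e ≤ m) : coeff e (qPoch m) = coeff e qPochInf := by
  rw [qPochInf, coeff_mk]
  induction m, h using Nat.le_induction with
  | base => rfl
  | succ m hem ih =>
    rw [← ih, qPoch, Finset.prod_range_succ, ← qPoch, mul_sub, mul_one, map_sub,
      coeff_mul_X_pow', if_neg (by omega), sub_zero]

theorem isUnit_qPochInf : IsUnit qPochInf := by
  refine isUnit_iff_constantCoeff.mpr ?_
  rw [← coeff_zero_eq_constantCoeff_apply, ← coeff_qPoch_of_le le_rfl,
    coeff_zero_eq_constantCoeff_apply, constantCoeff_qPoch]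
  exact isUnit_one

theorem mk_qPoch {n m : ℕ} (h : n ≤ m + 1) : π[n] (qPoch m) = π[n] qPochInf :=
  mk_span_X_pow_eq_iff.mpr fun _ he ↦ coeff_qPoch_of_le (by omega)

theorem mk_seriesSum {f : ℕ → ℤ⟦X⟧} (hf : ∀ k, X ^ k ∣ f k) (n : ℕ) :
    π[n] (SeriesSum f) = π[n] (∑ k ∈ Finset.range n, f k) := by
  refine mk_span_X_pow_eq_iff.mpr fun e he ↦ ?_
  have := mk_span_X_pow_eq_iff.mp (mk_sum_range_of_X_pow_dvd hf (show e + 1 ≤ n by omega)) e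
    (lt_add_one e)
  rw [SeriesSum, coeff_mk, ← map_sum, this]

theorem mk_term_eq_mul_inverse_qPochInf_cube {n a b c₁ c₂ c₃ c₄ : ℕ} (y z : ℤ⟦X⟧) {A : ℤ⟦X⟧}
    (hA : IsUnit A) (ha : n ≤ a) (hb : n ≤ b + 1)
    (h₁ : n ≤ c₁ + 1) (h₂ : n ≤ c₂ + 1) (h₃ : n ≤ c₃ + 1) (h₄ : n ≤ c₄ + 1) :
    π[n] (y * (1 - X ^ a) * z * qPoch b *
        Ring.inverse (A * (qPoch c₁ * qPoch c₂ * qPoch c₃ * qPoch c₄))) =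
      π[n] (y * z * Ring.inverse A) * π[n] (Ring.inverse (qPochInf ^ 3)) := by
  have hden :
      π[n] (A * (qPoch c₁ * qPoch c₂ * qPoch c₃ * qPoch c₄)) = π[n] (A * qPochInf ^ 4) := by
    simp only [map_mul, map_pow, mk_qPoch h₁, mk_qPoch h₂, mk_qPoch h₃, mk_qPoch h₄]
    ring
  have hQ : IsUnit (qPoch c₁ * qPoch c₂ * qPoch c₃ * qPoch c₄) := by
    simp only [IsUnit.mul_iff, isUnit_qPoch, and_self]
  have hinv : π[n] (Ring.inverse (A * (qPoch c₁ * qPoch c₂ * qPoch c₃ * qPoch c₄))) =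
      π[n] (Ring.inverse (A * qPochInf ^ 4)) := by
    rw [Ring.map_inverse _ (hA.mul hQ), Ring.map_inverse _ (hA.mul (isUnit_qPochInf.pow 4)),
      hden]
  have hXa : π[n] (X ^ a) = 0 := mk_span_X_pow_eq_zero dvd_rfl ha
  rw [← map_mul, mul_assoc _ (Ring.inverse A),
    ← Ring.mul_inverse_mul_pow_succ isUnit_qPochInf A 3]
  simp only [map_mul, map_sub, map_one, hXa, sub_zero, mk_qPoch hb, hinv]
  ring

theorem stmt5 (s₁ s₂ s₃ S t₁ t₂ t₃ t₄ : ℕ) (d : ℕ) :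
    ∃ N₀ : ℕ, ∀ N : ℕ, N₀ ≤ N →
      coeff d (Ring.inverse (1 - (X : PowerSeries ℤ)) *
        ∑ l ∈ Finset.range (N + min t₁ (min t₂ (min t₃ t₄)) + 1),
          (-1 : PowerSeries ℤ) ^ l * (1 - (X : PowerSeries ℤ) ^ (4 * N + S - l)) *
            (X : PowerSeries ℤ) ^ (l * (3 * l + 1) / 2 + l * (s₁ + s₂ + s₃)) *
            qPoch (4 * N + S - l) *
            Ring.inverse (qPoch (s₁ + l) * qPoch (s₂ + l) * qPoch (s₃ + l) *
              (qPoch (N + t₁ - l) * qPoch (N + t₂ - l) * qPoch (N + t₃ - l) *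
                qPoch (N + t₄ - l))))
      = coeff d (Ring.inverse ((1 - (X : PowerSeries ℤ)) * qPochInf ^ 3) *
          SeriesSum fun l => (-1 : PowerSeries ℤ) ^ l *
            (X : PowerSeries ℤ) ^ (l * (3 * l + 1) / 2 + l * (s₁ + s₂ + s₃)) *
            Ring.inverse (qPoch (s₁ + l) * qPoch (s₂ + l) * qPoch (s₃ + l))) := by
  refine ⟨2 * d + 1, fun N hN ↦ mk_span_X_pow_eq_iff.mp ?_ d (lt_add_one d)⟩
  have hX : ∀ l, X ^ l ∣ (X : ℤ⟦X⟧) ^ (l * (3 * l + 1) / 2 + l * (s₁ + s₂ + s₃)) :=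
    fun l ↦ pow_dvd_pow X (Nat.le_pentagonal_add_mul l _)
  rw [map_mul, Ring.mul_inverse_rev, map_mul, map_mul,
    mk_sum_range_of_X_pow_dvd (fun l ↦ ((dvd_mul_of_dvd_right (hX l) _).mul_right _).mul_right _)
      (show d + 1 ≤ N + min t₁ (min t₂ (min t₃ t₄)) + 1 by omega),
    mk_seriesSum (fun l ↦ (dvd_mul_of_dvd_right (hX l) _).mul_right _), map_sum, map_sum,
    Finset.sum_congr rfl fun l hl ↦ mk_term_eq_mul_inverse_qPochInf_cube _ _
      (((isUnit_qPoch _).mul (isUnit_qPoch _)).mul (isUnit_qPoch _)) ?_ ?_ ?_ ?_ ?_ ?_,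
    ← Finset.sum_mul]
  · ring
  all_goals have := Finset.mem_range.mp hl; omega
end
end

section
/- Durfee-type splitting identity: for all natural numbers m and n, the following identity holds in ℤ[[q]]: 1/((q;q)_m (q;q)_n) = Σ q^{rt} / ((q;q)_r (q;q)_s (q;q)_t), where the sum is over all triples (r,s,t) of natural numbers with r + s = m and s + t = n (equivalently, over s = 0, 1, …, min(m,n) with r = m − s and t = n − s). -/
/-!
Both sides satisfy the recursion `(1 - q^{m+1}) F(m+1, n+1) = F(m, n) + q^{n+1} F(m, n+1)`.
For the left side this is `(1 - q^{n+1}) + q^{n+1} = 1`; for the sum it holds term by term after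
splitting `1 - q^{r+s} = (1 - q^s) + q^s (1 - q^r)`, which lowers either `s` or `r` by one.
Induction on `min m n` then gives the identity, the sum being symmetric in `m` and `n`.
-/

noncomputable section
open PowerSeries

open Finset

theorem Finset.sum_range_add_two_eq_of_shift {M : Type*} [AddCommMonoid M] {f g h : ℕ → M}
    {k : ℕ} (h₀ : f 0 = h 0) (hsucc : ∀ s < k, f (s + 1) = g s + h (s + 1))
    (hlast : f (k + 1) = g k) :
    ∑ s ∈ range (k + 2), f s = ∑ s ∈ range (k + 1), g s + ∑ s ∈ range (k + 1), h s := by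
  rw [sum_range_succ' f, sum_range_succ, sum_range_succ, sum_range_succ' h, h₀, hlast,
    sum_congr rfl fun s hs => hsucc s (mem_range.mp hs), sum_add_distrib]
  abel

theorem PowerSeries.isUnit_one_sub_X_pow {R : Type*} [CommRing R] (k : ℕ) :
    IsUnit (1 - X ^ (k + 1) : PowerSeries R) := by
  simp [isUnit_iff_constantCoeff]

theorem qPoch_succ (n : ℕ) : qPoch (n + 1) = qPoch n * (1 - X ^ (n + 1)) :=
  prod_range_succ _ _

theorem inverse_qPoch (n : ℕ) :
    Ring.inverse (qPoch n) = (1 - X ^ (n + 1)) * Ring.inverse (qPoch (n + 1)) := by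
  rw [qPoch_succ, Ring.mul_inverse_rev, ← mul_assoc,
    Ring.mul_inverse_cancel _ (isUnit_one_sub_X_pow n), one_mul]

def durfeeTerm (r s t : ℕ) : PowerSeries ℤ :=
  X ^ (r * t) * Ring.inverse (qPoch r * qPoch s * qPoch t)

theorem durfeeTerm_eq (r s t : ℕ) : durfeeTerm r s t =
    X ^ (r * t) * (Ring.inverse (qPoch r) * Ring.inverse (qPoch s) * Ring.inverse (qPoch t)) := by
  simp only [durfeeTerm, Ring.mul_inverse_rev]
  ring

theorem durfeeTerm_comm (r s t : ℕ) : durfeeTerm r s t = durfeeTerm t s r := by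
  simp only [durfeeTerm_eq]
  ring

theorem one_sub_X_pow_mul_durfeeTerm (r s t : ℕ) :
    (1 - X ^ (r + 1 + (s + 1))) * durfeeTerm (r + 1) (s + 1) t
      = durfeeTerm (r + 1) s t + X ^ (t + (s + 1)) * durfeeTerm r (s + 1) t := by
  simp only [durfeeTerm_eq, inverse_qPoch r, inverse_qPoch s]
  ring

theorem one_sub_X_pow_mul_durfeeTerm_zero_mid (r t : ℕ) :
    (1 - X ^ (r + 1)) * durfeeTerm (r + 1) 0 t = X ^ t * durfeeTerm r 0 t := by
  simp only [durfeeTerm_eq, inverse_qPoch r]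
  ring

theorem one_sub_X_pow_mul_durfeeTerm_zero_left (s t : ℕ) :
    (1 - X ^ (s + 1)) * durfeeTerm 0 (s + 1) t = durfeeTerm 0 s t := by
  simp only [durfeeTerm_eq, inverse_qPoch s]
  ring

theorem one_sub_X_pow_mul_sum_durfeeTerm {m n : ℕ} (hmn : m ≤ n) :
    (1 - X ^ (m + 1)) * ∑ s ∈ range (m + 2), durfeeTerm (m + 1 - s) s (n + 1 - s)
      = ∑ s ∈ range (m + 1), durfeeTerm (m - s) s (n - s)
        + X ^ (n + 1) * ∑ s ∈ range (m + 1), durfeeTerm (m - s) s (n + 1 - s) := by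
  rw [mul_sum, mul_sum]
  apply sum_range_add_two_eq_of_shift
  · exact one_sub_X_pow_mul_durfeeTerm_zero_mid m (n + 1)
  · intro s hs
    obtain ⟨r, rfl⟩ := Nat.exists_eq_add_of_lt hs
    obtain ⟨t, rfl⟩ := Nat.exists_eq_add_of_le (hs.le.trans hmn)
    convert one_sub_X_pow_mul_durfeeTerm r s t using 4 <;> omega
  · rw [Nat.sub_self, Nat.sub_self, show n + 1 - (m + 1) = n - m by omega]
    exact one_sub_X_pow_mul_durfeeTerm_zero_left m (n - m)

theorem inverse_qPoch_mul_qPoch_of_le {m n : ℕ} (hmn : m ≤ n) :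
    Ring.inverse (qPoch m * qPoch n) = ∑ s ∈ range (m + 1), durfeeTerm (m - s) s (n - s) := by
  induction m generalizing n with
  | zero => simp [durfeeTerm, qPoch]
  | succ m ih =>
    obtain ⟨n, rfl⟩ : ∃ k, n = k + 1 := ⟨n - 1, by omega⟩
    apply (isUnit_one_sub_X_pow m).mul_left_cancel
    rw [one_sub_X_pow_mul_sum_durfeeTerm (by omega), ← ih (by omega), ← ih (by omega),
      Ring.mul_inverse_rev, Ring.mul_inverse_rev, Ring.mul_inverse_rev, inverse_qPoch m,
      inverse_qPoch n]
    ring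

theorem stmt8 (m n : ℕ) :
    Ring.inverse (qPoch m * qPoch n)
    = ∑ s ∈ Finset.range (min m n + 1),
        (X : PowerSeries ℤ) ^ ((m - s) * (n - s)) *
          Ring.inverse (qPoch (m - s) * qPoch s * qPoch (n - s)) := by
  rcases le_total m n with hmn | hnm
  · rw [min_eq_left hmn]
    exact inverse_qPoch_mul_qPoch_of_le hmn
  · rw [min_eq_right hnm, mul_comm, inverse_qPoch_mul_qPoch_of_le hnm]
    exact sum_congr rfl fun s _ => durfeeTerm_comm _ _ _
end
end
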